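/- Consider F(x) = f(Ax) + g(x), where f : ℝ^n → ℝ is strongly convex and continuously differentiable, A ∈ ℝ^{n×d}, and g : ℝ^d → ℝ is a finite-valued polyhedral convex function, i.e. g(x) = max_{1≤i≤m}{a_iᵀx + b_i} for some vectors a_i and scalars b_i. If the optimal set 𝒳* = argmin F is nonempty, then 𝒳* is polyhedral: there exist a matrix M̄ and a vector q̄ such that 𝒳* = {x ∈ ℝ^d : M̄x ≤ q̄}. Moreover, there is a unique vector y* with Ax = y* for all x ∈ 𝒳*, and there exist a matrix B and vector c with {x : −Aᵀ∇f(y*) ∈ ∂g(x)} = {x : Bx ≤ c}, so that 𝒳* = {x : Ax = y*, Bx ≤ c}. -/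

import Mathlib

noncomputable section

open Metric Set
open scoped RealInnerProductSpace

/-- `E d` is the Euclidean space `ℝ^d`. -/
abbrev E (d : ℕ) : Type := EuclideanSpace ℝ (Fin d)

/-- The convex subdifferential of `g : ℝ^d → ℝ` at `x`. -/
def subdiff {d : ℕ} (g : E d → ℝ) (x : E d) : Set (E d) :=
  {v | ∀ y, g x + ⟪v, y - x⟫ ≤ g y}

lemma fin_append_forall₂ {α β : Type*} {p : α → β → Prop} {n m : ℕ}
    (u : Fin n → α) (v : Fin m → α) (u' : Fin n → β) (v' : Fin m → β) :
    (∀ i, p (Fin.append u v i) (Fin.append u' v' i)) ↔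
      ((∀ i, p (u i) (u' i)) ∧ (∀ i, p (v i) (v' i))) := by
  constructor
  · intro h
    exact ⟨fun i => by simpa [Fin.append_left] using h (Fin.castAdd m i),
           fun i => by simpa [Fin.append_right] using h (Fin.natAdd n i)⟩
  · rintro ⟨h1, h2⟩ i
    refine Fin.addCases (fun j => ?_) (fun j => ?_) i <;>
      simp [Fin.append_left, Fin.append_right, h1, h2]

set_option maxHeartbeats 1000000 in
/-- Polyhedrality of the optimal set.
Consider `F(x) = f(Ax) + g(x)` with `f` `α`-strongly convex (`α > 0`) and differentiable
(with gradient `fn'`), and `g` a finite-valued polyhedral convex function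
`g(x) = max_i (⟨a i, x⟩ + b i)` (with `m ≥ 1`). If the optimal set
`𝒳* = argmin F` is nonempty, then `𝒳*` is polyhedral; moreover there is a unique
`y*` with `Ax = y*` for all `x ∈ 𝒳*`, and there exist rows `B` and a vector `c` with
`{x | −Aᵀ∇f(y*) ∈ ∂g(x)} = {x | Bx ≤ c}` so that `𝒳* = {x | Ax = y*, Bx ≤ c}`. -/
theorem stmt_6 {n d m : ℕ} (hm : 0 < m) (f : E n → ℝ) (fn' : E n → E n)
    (A : E d →L[ℝ] E n) (a : Fin m → E d) (b : Fin m → ℝ) (g : E d → ℝ)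
    (α : ℝ) (hα : 0 < α)
    (hf' : ∀ z, HasGradientAt f (fn' z) z)
    (hsc : ∀ u v : E n, f u + ⟪fn' u, v - u⟫ + α / 2 * ‖v - u‖ ^ 2 ≤ f v)
    (hg : ∀ x, g x = ⨆ i : Fin m, (⟪a i, x⟫ + b i))
    (Xstar : Set (E d))
    (hXstar : Xstar = {z | ∀ x, f (A z) + g z ≤ f (A x) + g x})
    (hne : Xstar.Nonempty) :
    (∃ (k' : ℕ) (M : Fin k' → E d) (q : Fin k' → ℝ),
      Xstar = {x | ∀ i, ⟪M i, x⟫ ≤ q i}) ∧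
    (∃! ystar : E n, ∀ x ∈ Xstar, A x = ystar) ∧
    (∀ ystar : E n, (∀ x ∈ Xstar, A x = ystar) →
      ∃ (k : ℕ) (B : Fin k → E d) (c : Fin k → ℝ),
        {x | -(ContinuousLinearMap.adjoint A (fn' ystar)) ∈ subdiff g x} =
          {x | ∀ i, ⟪B i, x⟫ ≤ c i} ∧
        Xstar = {x | A x = ystar ∧ ∀ i, ⟪B i, x⟫ ≤ c i}) := by
  have hmne : Nonempty (Fin m) := ⟨⟨0, hm⟩⟩
  obtain ⟨x₀, hx₀⟩ := hne
  -- basic facts about g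
  have hge : ∀ (i : Fin m) x, ⟪a i, x⟫ + b i ≤ g x := by
    intro i x
    rw [hg x]
    exact le_ciSup (f := fun i : Fin m => ⟪a i, x⟫ + b i) ((Set.finite_range _).bddAbove) i
  have hgle : ∀ (x : E d) (M : ℝ), (∀ i, ⟪a i, x⟫ + b i ≤ M) → g x ≤ M := by
    intro x M h
    rw [hg x]
    exact ciSup_le h
  have gcomb : ∀ (x z : E d) (t : ℝ), 0 ≤ t → t ≤ 1 →
      g (x + t • (z - x)) ≤ (1 - t) * g x + t * g z := by
    intro x z t ht0 ht1
    apply hgle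
    intro i
    have h1 := hge i x
    have h2 := hge i z
    have he : ⟪a i, x + t • (z - x)⟫ + b i
        = (1 - t) * (⟪a i, x⟫ + b i) + t * (⟪a i, z⟫ + b i) := by
      simp [inner_add_right, inner_smul_right, inner_sub_right]
      ring
    rw [he]
    have h3 := mul_le_mul_of_nonneg_left h1 (by linarith : (0:ℝ) ≤ 1 - t)
    have h4 := mul_le_mul_of_nonneg_left h2 ht0
    linarith
  -- A is constant on Xstar
  have hAconst : ∀ x₁ ∈ Xstar, ∀ x₂ ∈ Xstar, A x₁ = A x₂ := by
    intro x₁ hx₁ x₂ hx₂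
    rw [hXstar] at hx₁ hx₂
    set u := A x₁ with hu
    set v := A x₂ with hv
    set w := x₁ + (2⁻¹ : ℝ) • (x₂ - x₁) with hw
    have hAw : A w = u + (2⁻¹ : ℝ) • (v - u) := by
      simp [hw, map_add, map_smul, map_sub, hu, hv]
    set m' := u + (2⁻¹ : ℝ) • (v - u) with hm'
    have e1 : u - m' = (-(2⁻¹ : ℝ)) • (v - u) := by module
    have e2 : v - m' = ((2⁻¹ : ℝ)) • (v - u) := by module
    have hn1 : ‖u - m'‖ ^ 2 = (2⁻¹)^2 * ‖v - u‖ ^ 2 := by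
      rw [e1, norm_smul]; simp [mul_pow]
    have hn2 : ‖v - m'‖ ^ 2 = (2⁻¹)^2 * ‖v - u‖ ^ 2 := by
      rw [e2, norm_smul]; simp [mul_pow]
    have hi1 : ⟪fn' m', u - m'⟫ = (-(2⁻¹ : ℝ)) * ⟪fn' m', v - u⟫ := by
      rw [e1, real_inner_smul_right]
    have hi2 : ⟪fn' m', v - m'⟫ = ((2⁻¹ : ℝ)) * ⟪fn' m', v - u⟫ := by
      rw [e2, real_inner_smul_right]
    have hs1 := hsc m' u
    have hs2 := hsc m' v
    have hgw := gcomb x₁ x₂ (2⁻¹) (by norm_num) (by norm_num)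
    rw [← hw] at hgw
    have hFw := hx₁ w
    rw [hAw] at hFw
    have hF12 := hx₁ x₂
    have hF21 := hx₂ x₁
    rw [hi1, hn1] at hs1
    rw [hi2, hn2] at hs2
    -- combine
    have hzero : α * ‖v - u‖ ^ 2 ≤ 0 := by nlinarith
    have hzero2 : ‖v - u‖ ^ 2 ≤ 0 := by
      by_contra hcon
      push_neg at hcon
      nlinarith [mul_pos hα hcon]
    have : ‖v - u‖ ^ 2 = 0 := le_antisymm hzero2 (sq_nonneg _)
    have : ‖v - u‖ = 0 := by
      have hnn := norm_nonneg (v - u)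
      nlinarith
    have : v - u = 0 := by rwa [norm_eq_zero] at this
    have : v = u := by rwa [sub_eq_zero] at this
    exact this.symm
  -- forward optimality
  have fwd : ∀ x ∈ Xstar, -(ContinuousLinearMap.adjoint A (fn' (A x))) ∈ subdiff g x := by
    intro x hx z
    rw [hXstar] at hx
    set w := A z - A x with hwdef
    have line : HasDerivAt (fun t : ℝ => A x + t • w) w 0 := by
      simpa using ((hasDerivAt_id (0:ℝ)).smul_const w).const_add (A x)
    have hf2 : HasFDerivAt f ((InnerProductSpace.toDual ℝ (E n)) (fn' (A x)))
        (A x + (0:ℝ) • w) := by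
      simpa using (hf' (A x)).hasFDerivAt
    have hd : HasDerivAt (fun t : ℝ => f (A x + t • w)) ⟪fn' (A x), w⟫ 0 := by
      simpa [InnerProductSpace.toDual_apply_apply, Function.comp_def] using hf2.comp_hasDerivAt 0 line
    set φ : ℝ → ℝ := fun t => f (A x + t • w) with hφ
    have key : ∀ t ∈ Set.Ioc (0:ℝ) 1, g x - g z ≤ slope φ 0 t := by
      rintro t ⟨ht0, ht1⟩
      have hF := hx (x + t • (z - x))
      have hA : A (x + t • (z - x)) = A x + t • w := by
        simp [map_add, map_smul, map_sub, hwdef]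
      rw [hA] at hF
      have hgc := gcomb x z t ht0.le ht1
      have hnum : t * (g x - g z) ≤ φ t - φ 0 := by
        simp only [hφ]
        have : (0:ℝ) • w = 0 := zero_smul _ _
        rw [this, add_zero]
        nlinarith
      have hslope : slope φ 0 t = (φ t - φ 0) / t := by
        simp [slope_def_field]
      rw [hslope, le_div_iff₀ ht0]
      linarith
    have tends : Filter.Tendsto (slope φ 0) (nhdsWithin 0 (Set.Ioi 0)) (nhds ⟪fn' (A x), w⟫) :=
      (hasDerivAt_iff_tendsto_slope.mp hd).mono_left
        (nhdsWithin_mono _ (fun t ht => ne_of_gt ht))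
    have hlim : g x - g z ≤ ⟪fn' (A x), w⟫ := by
      refine ge_of_tendsto tends ?_
      filter_upwards [Ioc_mem_nhdsGT_of_mem ⟨le_refl (0:ℝ), zero_lt_one⟩] with t ht
      exact key t ht
    have hip : ⟪-(ContinuousLinearMap.adjoint A (fn' (A x))), z - x⟫
        = -⟪fn' (A x), w⟫ := by
      rw [inner_neg_left, ContinuousLinearMap.adjoint_inner_left, map_sub]
    rw [hip]
    linarith
  -- backward optimality
  have bwd : ∀ x : E d, -(ContinuousLinearMap.adjoint A (fn' (A x))) ∈ subdiff g x →
      x ∈ Xstar := by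
    intro x hv
    rw [hXstar]
    intro z
    have h1 := hsc (A x) (A z)
    have h2 := hv z
    have hip : ⟪-(ContinuousLinearMap.adjoint A (fn' (A x))), z - x⟫
        = -⟪fn' (A x), A z - A x⟫ := by
      rw [inner_neg_left, ContinuousLinearMap.adjoint_inner_left, map_sub]
    rw [hip] at h2
    nlinarith [sq_nonneg ‖A z - A x‖, norm_nonneg (A z - A x)]
  -- the third clause, proved first
  have third : ∀ ystar : E n, (∀ x ∈ Xstar, A x = ystar) →
      ∃ (k : ℕ) (B : Fin k → E d) (c : Fin k → ℝ),
        {x | -(ContinuousLinearMap.adjoint A (fn' ystar)) ∈ subdiff g x} =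
          {x | ∀ i, ⟪B i, x⟫ ≤ c i} ∧
        Xstar = {x | A x = ystar ∧ ∀ i, ⟪B i, x⟫ ≤ c i} := by
    intro ystar hy'
    have hy0 : A x₀ = ystar := hy' x₀ hx₀
    set v : E d := -(ContinuousLinearMap.adjoint A (fn' ystar)) with hvdef
    have hvx₀ : v ∈ subdiff g x₀ := by
      have := fwd x₀ hx₀
      rwa [hy0] at this
    set μ : ℝ := g x₀ - ⟪v, x₀⟫ with hμ
    refine ⟨m, fun i => a i - v, fun i => μ - b i, ?_, ?_⟩
    · ext x
      simp only [Set.mem_setOf_eq]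
      constructor
      · intro h i
        have h0 := h x₀
        rw [inner_sub_right] at h0
        have hgi := hge i x
        rw [inner_sub_left]
        linarith
      · intro h y
        have hgx : g x ≤ μ + ⟪v, x⟫ := by
          apply hgle
          intro i
          have := h i
          rw [inner_sub_left] at this
          linarith
        have h0 := hvx₀ y
        rw [inner_sub_right] at h0
        rw [inner_sub_right]
        linarith
    · ext x
      simp only [Set.mem_setOf_eq]
      constructor
      · intro hx
        refine ⟨hy' x hx, ?_⟩
        have hvx : v ∈ subdiff g x := by
          have := fwd x hx
          rwa [hy' x hx] at this
        intro i
        have h0 := hvx x₀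
        rw [inner_sub_right] at h0
        have hgi := hge i x
        rw [inner_sub_left]
        linarith
      · rintro ⟨hAx, hineq⟩
        have hvx : v ∈ subdiff g x := by
          intro y
          have hgx : g x ≤ μ + ⟪v, x⟫ := by
            apply hgle
            intro i
            have := hineq i
            rw [inner_sub_left] at this
            linarith
          have h0 := hvx₀ y
          rw [inner_sub_right] at h0
          rw [inner_sub_right]
          linarith
        apply bwd
        rw [hAx]
        exact hvx
  -- assemble
  have hy : ∀ x ∈ Xstar, A x = A x₀ := fun x hx => hAconst x hx x₀ hx₀
  refine ⟨?_, ⟨A x₀, hy, fun y' hy' => (hy' x₀ hx₀).symm⟩, third⟩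
  obtain ⟨k, B, c, _, hBc2⟩ := third (A x₀) hy
  refine ⟨(n + n) + k,
    Fin.append (Fin.append (fun j => ContinuousLinearMap.adjoint A (EuclideanSpace.single j (1:ℝ)))
      (fun j => -(ContinuousLinearMap.adjoint A (EuclideanSpace.single j (1:ℝ))))) B,
    Fin.append (Fin.append (fun j => A x₀ j) (fun j => -(A x₀ j))) c, ?_⟩
  rw [hBc2]
  ext x
  simp only [Set.mem_setOf_eq]
  rw [fin_append_forall₂ (p := fun (u : E d) (r : ℝ) => ⟪u, x⟫ ≤ r),
      fin_append_forall₂ (p := fun (u : E d) (r : ℝ) => ⟪u, x⟫ ≤ r)]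
  have hcoord : ∀ j : Fin n,
      ⟪ContinuousLinearMap.adjoint A (EuclideanSpace.single j (1:ℝ)), x⟫ = A x j := by
    intro j
    rw [ContinuousLinearMap.adjoint_inner_left]
    simp [EuclideanSpace.inner_single_left]
  constructor
  · rintro ⟨hAx, hineq⟩
    refine ⟨⟨fun j => ?_, fun j => ?_⟩, hineq⟩
    · rw [hcoord j, hAx]
    · rw [inner_neg_left, hcoord j, hAx]
  · rintro ⟨⟨h1, h2⟩, hineq⟩
    refine ⟨?_, hineq⟩
    ext j
    have ha := h1 j
    have hb := h2 j
    rw [hcoord j] at ha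
    rw [inner_neg_left, hcoord j] at hb
    have : A x₀ j ≤ A x j := by linarith
    exact le_antisymm ha this
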